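/- The support of a multiplicative critical datum is contained in a single maximal cone: let Σ be a simplicial fan in N_ℝ and let (c_k)_{k ∈ N ∩ |Σ|} be complex numbers satisfying c_k c_l = c_{k+l} whenever k̄ and l̄ lie in a common cone of Σ, and c_k c_l = 0 whenever k̄ and l̄ do not lie in a common cone. Then the support supp(c) = {k ∈ N ∩ |Σ| : c_k ≠ 0} satisfies: any two elements of supp(c) have images in a common cone of Σ; consequently, if Σ has finitely many cones, supp(c) is contained in N ∩ σ for some single cone σ of Σ. -/

import Mathlib

open scoped BigOperators

/-- Combinatorial data of a (stacky) fan: a finitely generated abelian group `N` with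
its realification map `bar : N → N_ℝ = V`, ray generators `b₁,…,b_m ∈ N`, and a finite
collection of cones, each identified (as in the paper) with the subset of
`{1,…,m}` indexing its rays. -/
structure FanData (N V : Type*) [AddCommGroup N] [AddCommGroup V] [Module ℝ V]
    (m : ℕ) where
  bar : N →+ V
  b : Fin m → N
  cones : Finset (Finset (Fin m))

namespace FanData

variable {N V : Type*} [AddCommGroup N] [AddCommGroup V] [Module ℝ V] {m : ℕ}
variable (F : FanData N V m)

/-- The cone of `V` spanned by the rays indexed by `σ`. -/
def coneSet (σ : Finset (Fin m)) : Set V :=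
  {x | ∃ c : Fin m → ℝ, (∀ i, 0 ≤ c i) ∧ (∀ i, i ∉ σ → c i = 0) ∧
      x = ∑ i, c i • F.bar (F.b i)}

/-- The support `|Σ|` of the fan. -/
def support : Set V := ⋃ σ ∈ F.cones, F.coneSet σ

/-- The set `N ∩ |Σ|` of lattice points of the support. -/
def latticePts : Set N := {k | F.bar k ∈ F.support}

/-- Simpliciality: the rays of each cone are linearly independent. -/
def Simplicial : Prop :=
  ∀ σ ∈ F.cones, LinearIndependent ℝ (fun i : σ => F.bar (F.b (i : Fin m)))

/-- The collection of cones is closed under passing to faces. -/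
def FacesClosed : Prop := ∀ σ ∈ F.cones, ∀ τ, τ ⊆ σ → τ ∈ F.cones

/-- Two cones of the fan meet along a common face. -/
def MeetsInFaces : Prop :=
  ∀ σ ∈ F.cones, ∀ τ ∈ F.cones, ∀ x ∈ F.coneSet σ, x ∈ F.coneSet τ →
    x ∈ F.coneSet (σ ∩ τ)

/-- `Ψ : N ∩ |Σ| → (ℚ_{≥0})^m` records the (unique, by simpliciality) nonnegative
barycentric coordinates of `k̄` on the rays of its minimal cone: `Ψ(k) ≥ 0`,
`k̄ = Σᵢ Ψᵢ(k) b̄ᵢ`, and the support of `Ψ(k)` is contained in every cone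
containing `k̄` (Notation 2.2 of the paper). -/
def IsPsi (Ψ : N → Fin m → ℚ) : Prop :=
  ∀ k ∈ F.latticePts,
    (∀ i, 0 ≤ Ψ k i) ∧
    (F.bar k = ∑ i, (Ψ k i : ℝ) • F.bar (F.b i)) ∧
    (∀ σ ∈ F.cones, F.bar k ∈ F.coneSet σ → ∀ i, Ψ k i ≠ 0 → i ∈ σ)

/-- The subgroup `𝕆 = Σ_{k ∈ N ∩ |Σ|} ℤ·(Ψ(k), k) ⊆ ℚ^m ⊕ N`. -/
def OO (Ψ : N → Fin m → ℚ) : AddSubgroup ((Fin m → ℚ) × N) :=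
  AddSubgroup.closure {p | ∃ k ∈ F.latticePts, p = (Ψ k, k)}

/-- The lattice `Λ = {(λ, 0) ∈ 𝕆} ⊆ ℚ^m` of the refined fan sequence. -/
def Lam (Ψ : N → Fin m → ℚ) : AddSubgroup (Fin m → ℚ) :=
  (F.OO Ψ).comap (AddMonoidHom.inl (Fin m → ℚ) N)

end FanData

namespace FanData

variable {N V : Type*} [AddCommGroup N] [AddCommGroup V] [Module ℝ V] {m : ℕ}
variable (F : FanData N V m)

def CommonCone (x y : V) : Prop :=
  ∃ σ ∈ F.cones, x ∈ F.coneSet σ ∧ y ∈ F.coneSet σ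

variable {F}

lemma coneSet_mono {σ τ : Finset (Fin m)} (h : σ ⊆ τ) : F.coneSet σ ⊆ F.coneSet τ := by
  rintro x ⟨a, ha0, has, rfl⟩
  exact ⟨a, ha0, fun i hi => has i (fun h' => hi (h h')), rfl⟩

lemma add_mem_coneSet {σ : Finset (Fin m)} {x y : V} (hx : x ∈ F.coneSet σ)
    (hy : y ∈ F.coneSet σ) : x + y ∈ F.coneSet σ := by
  obtain ⟨a, ha0, has, rfl⟩ := hx
  obtain ⟨b, hb0, hbs, rfl⟩ := hy
  refine ⟨a + b, fun i => add_nonneg (ha0 i) (hb0 i), fun i hi => by simp [has i hi, hbs i hi], ?_⟩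
  simp only [Pi.add_apply, add_smul, Finset.sum_add_distrib]

lemma CommonCone.add_mem_support {x y : V} (h : F.CommonCone x y) : x + y ∈ F.support :=
  let ⟨_, hσ, hx, hy⟩ := h
  Set.mem_biUnion hσ (add_mem_coneSet hx hy)

/-- For a simplicial cone `σ`, every subcone `ρ ⊆ σ` is a face of `σ`. -/
lemma mem_coneSet_of_add_mem_of_subset {σ ρ : Finset (Fin m)}
    (hσ : LinearIndepOn ℝ (fun i => F.bar (F.b i)) (σ : Set (Fin m))) (hρσ : ρ ⊆ σ) {x y : V}
    (hx : x ∈ F.coneSet σ) (hy : y ∈ F.coneSet σ) (hxy : x + y ∈ F.coneSet ρ) :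
    x ∈ F.coneSet ρ := by
  obtain ⟨a, ha0, has, rfl⟩ := hx
  obtain ⟨b, hb0, hbs, rfl⟩ := hy
  obtain ⟨d, -, hdρ, hd⟩ := hxy
  have hdσ : ∀ i ∉ σ, d i = 0 := fun i hi => hdρ i fun h => hi (hρσ h)
  -- the coordinates of `x + y` on the independent rays of `σ` are unique
  have hcoord : ∀ i, a i + b i - d i = 0 := by
    have hsum : ∑ i ∈ σ, (a i + b i - d i) • F.bar (F.b i) = 0 := by
      rw [Finset.sum_subset (Finset.subset_univ σ) fun i _ hi => by
        simp [has i hi, hbs i hi, hdσ i hi]]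
      simp only [add_smul, sub_smul, Finset.sum_add_distrib, Finset.sum_sub_distrib, hd,
        sub_self]
    intro i
    by_cases hi : i ∈ σ
    · exact linearIndepOn_iff''.1 hσ σ _ subset_rfl
        (fun i hi => by simp [has i hi, hbs i hi, hdσ i hi]) hsum i hi
    · simp [has i hi, hbs i hi, hdσ i hi]
  refine ⟨a, ha0, fun i hi => ?_, rfl⟩
  linarith [hcoord i, hdρ i hi, ha0 i, hb0 i]

lemma mem_coneSet_of_add_mem (hsimp : F.Simplicial) (hmeet : F.MeetsInFaces)
    {σ τ : Finset (Fin m)} (hσ : σ ∈ F.cones) (hτ : τ ∈ F.cones) {x y : V}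
    (hx : x ∈ F.coneSet σ) (hy : y ∈ F.coneSet σ) (hxy : x + y ∈ F.coneSet τ) :
    x ∈ F.coneSet τ :=
  coneSet_mono Finset.inter_subset_right <|
    mem_coneSet_of_add_mem_of_subset (hsimp σ hσ) Finset.inter_subset_left hx hy
      (hmeet σ hσ τ hτ _ (add_mem_coneSet hx hy) hxy)

/-- Sum one element of `T` outside each cone; the cone `τ` containing the sum contains each
summand, in particular the one chosen outside `τ`. -/
lemma exists_subset_coneSet (hsimp : F.Simplicial) (hmeet : F.MeetsInFaces)
    (hne : F.cones.Nonempty) {T : Set V} (hpair : ∀ x ∈ T, ∀ y ∈ T, F.CommonCone x y)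
    (hadd : ∀ x ∈ T, ∀ y ∈ T, x + y ∈ T) : ∃ σ ∈ F.cones, T ⊆ F.coneSet σ := by
  classical
  by_contra! hbad
  have : ∀ σ : F.cones, ∃ x ∈ T, x ∉ F.coneSet σ := fun σ => Set.not_subset.1 (hbad σ σ.2)
  choose g hgT hg using this
  have hsumT : ∀ s : Finset F.cones, s.Nonempty → ∑ σ ∈ s, g σ ∈ T := fun s hs =>
    Finset.sum_induction_nonempty g (· ∈ T) (fun x y hx hy => hadd x hx y hy) hs fun σ _ => hgT σ
  have := hne.to_subtype
  obtain ⟨τ, hτ, hsumτ, -⟩ := hpair _ (hsumT _ Finset.univ_nonempty) _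
    (hsumT _ Finset.univ_nonempty)
  let τ' : F.cones := ⟨τ, hτ⟩
  apply hg τ'
  rw [← Finset.add_sum_erase _ _ (Finset.mem_univ τ')] at hsumτ
  rcases (Finset.univ.erase τ').eq_empty_or_nonempty with hrest | hrest
  · rwa [hrest, Finset.sum_empty, add_zero] at hsumτ
  · obtain ⟨σ, hσ, hgσ, hrestσ⟩ := hpair _ (hgT _) _ (hsumT _ hrest)
    exact mem_coneSet_of_add_mem hsimp hmeet hσ hτ hgσ hrestσ hsumτ

end FanData

theorem FanData.crit_support_in_single_cone_general
    {N V : Type*} [AddCommGroup N] [AddCommGroup V] [Module ℝ V] {m : ℕ}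
    (F : FanData N V m) (hsimp : F.Simplicial) (hmeet : F.MeetsInFaces)
    (hbot : (∅ : Finset (Fin m)) ∈ F.cones)
    (c : N → ℂ)
    (hmul : ∀ k ∈ F.latticePts, ∀ l ∈ F.latticePts,
      ((∃ σ ∈ F.cones, F.bar k ∈ F.coneSet σ ∧ F.bar l ∈ F.coneSet σ) →
          c k * c l = c (k + l)) ∧
      (¬ (∃ σ ∈ F.cones, F.bar k ∈ F.coneSet σ ∧ F.bar l ∈ F.coneSet σ) →
          c k * c l = 0)) :
    (∀ k ∈ F.latticePts, ∀ l ∈ F.latticePts, c k ≠ 0 → c l ≠ 0 →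
        ∃ σ ∈ F.cones, F.bar k ∈ F.coneSet σ ∧ F.bar l ∈ F.coneSet σ) ∧
    (∃ σ ∈ F.cones, ∀ k ∈ F.latticePts, c k ≠ 0 → F.bar k ∈ F.coneSet σ) := by
  have hpair : ∀ k ∈ F.latticePts, ∀ l ∈ F.latticePts, c k ≠ 0 → c l ≠ 0 →
      F.CommonCone (F.bar k) (F.bar l) := fun k hk l hl hck hcl =>
    by_contra fun h => mul_ne_zero hck hcl ((hmul k hk l hl).2 h)
  refine ⟨hpair, ?_⟩
  obtain ⟨σ, hσ, hsub⟩ := F.exists_subset_coneSet hsimp hmeet ⟨∅, hbot⟩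
    (T := F.bar '' {k | k ∈ F.latticePts ∧ c k ≠ 0})
    (by
      rintro _ ⟨k, ⟨hk, hck⟩, rfl⟩ _ ⟨l, ⟨hl, hcl⟩, rfl⟩
      exact hpair k hk l hl hck hcl)
    (by
      rintro _ ⟨k, ⟨hk, hck⟩, rfl⟩ _ ⟨l, ⟨hl, hcl⟩, rfl⟩
      have hkl := hpair k hk l hl hck hcl
      refine ⟨k + l, ⟨?_, ?_⟩, map_add _ _ _⟩
      · show F.bar (k + l) ∈ F.support
        exact (map_add F.bar k l).symm ▸ hkl.add_mem_support
      · exact (hmul k hk l hl).1 hkl ▸ mul_ne_zero hck hcl)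
  exact ⟨σ, hσ, fun k hk hck => hsub ⟨k, ⟨hk, hck⟩, rfl⟩⟩

/-- The support of a multiplicative critical datum is contained in a single maximal
cone: if `(c_k)_{k ∈ N ∩ |Σ|}` satisfies `c_k c_l = c_{k+l}` whenever `k̄, l̄` lie in a
common cone of `Σ` and `c_k c_l = 0` otherwise, then any two elements of the support
`{k : c_k ≠ 0}` have images in a common cone; consequently (`Σ` having finitely many
cones) the support is contained in `N ∩ σ` for a single cone `σ` of `Σ`. -/
theorem FanData.crit_support_in_single_cone
    {N V : Type*} [AddCommGroup N] [AddCommGroup V] [Module ℝ V] {m : ℕ}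
    (F : FanData N V m) (hsimp : F.Simplicial) (hfaces : F.FacesClosed)
    (hmeet : F.MeetsInFaces) (hconv : Convex ℝ F.support)
    (hbot : (∅ : Finset (Fin m)) ∈ F.cones)
    (c : N → ℂ)
    (hmul : ∀ k ∈ F.latticePts, ∀ l ∈ F.latticePts,
      ((∃ σ ∈ F.cones, F.bar k ∈ F.coneSet σ ∧ F.bar l ∈ F.coneSet σ) →
          c k * c l = c (k + l)) ∧
      (¬ (∃ σ ∈ F.cones, F.bar k ∈ F.coneSet σ ∧ F.bar l ∈ F.coneSet σ) →
          c k * c l = 0)) :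
    (∀ k ∈ F.latticePts, ∀ l ∈ F.latticePts, c k ≠ 0 → c l ≠ 0 →
        ∃ σ ∈ F.cones, F.bar k ∈ F.coneSet σ ∧ F.bar l ∈ F.coneSet σ) ∧
    (∃ σ ∈ F.cones, ∀ k ∈ F.latticePts, c k ≠ 0 → F.bar k ∈ F.coneSet σ) :=
  FanData.crit_support_in_single_cone_general F hsimp hmeet hbot c hmul
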